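/- Let a_1,…,a_N ∈ R^n be unit ℓ2-norm vectors with μ = max_{i≠j}|⟨a_i,a_j⟩|, let x ∈ R^N be supported on Λ with nonzero magnitudes between |x_min| and |x_max|, assume for every i ∈ Λ that |{j ∈ Λ : ⟨a_i, a_j⟩ ≠ 0}| ≤ S, and let v ∈ R^n satisfy |⟨a_i, v⟩| ≤ ζ for every i ∈ Λ. Let ε_1,…,ε_N be i.i.d. uniform on {−1,+1} and set y = Σ_{j∈Λ} ε_j x_j a_j + v. Then for every p with 0 < p ≤ |x_min|, P( min_{i ∈ Λ} |⟨ε_i a_i, y⟩| < p ) ≤ 2 |Λ| · exp( −(|x_min| − p)² / (2 (|x_max|² S μ² + ζ²)) ). -/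

import Mathlib

/-!
Because `ε i = ±1` and `⟨a i, a i⟩ = 1`, the triangle inequality gives
`|⟨ε i • a i, y⟩| ≥ |x i| - |Z i|` with `Z i = ∑_{j ∈ Λ \ {i}} ε j x j ⟨a i, a j⟩ + ⟨a i, v⟩`.
By Hoeffding's lemma the Rademacher sum in `Z i` is sub-Gaussian with variance proxy
`∑ x j ² ⟨a i, a j⟩² ≤ xmax² S μ²`, and a Chernoff bound for its deviation beyond `xmin - p`,
followed by a union bound over `i ∈ Λ`, gives the claim.
-/

open MeasureTheory ProbabilityTheory Real Finset
open scoped NNReal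

def IsRademacher {Ω : Type*} [MeasurableSpace Ω] (X : Ω → ℝ) (P : Measure Ω) : Prop :=
  P {ω | X ω = 1} = 1 / 2 ∧ P {ω | X ω = -1} = 1 / 2

namespace IsRademacher

variable {Ω : Type*} [MeasurableSpace Ω] {P : Measure Ω} [IsProbabilityMeasure P] {X : Ω → ℝ}

lemma ae_eq_one_or_eq_neg_one (hX : IsRademacher X P) (hm : Measurable X) :
    ∀ᵐ ω ∂P, X ω = 1 ∨ X ω = -1 := by
  have hdisj : Disjoint {ω | X ω = 1} {ω | X ω = -1} :=
    Set.disjoint_left.2 fun ω (h : X ω = 1) (h' : X ω = -1) => by norm_num [h] at h'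
  have hunion : P ({ω | X ω = 1} ∪ {ω | X ω = -1}) = 1 := by
    rw [measure_union hdisj (hm (measurableSet_singleton _)), hX.1, hX.2, ENNReal.add_halves]
  exact (ae_iff_measure_eq (((hm (measurableSet_singleton 1)).union
    (hm (measurableSet_singleton (-1)))).nullMeasurableSet)).2 (hunion.trans measure_univ.symm)

lemma integral_eq_zero (hX : IsRademacher X P) (hm : Measurable X) : P[X] = 0 := by
  have hA : MeasurableSet {ω | X ω = 1} := hm (measurableSet_singleton 1)
  have hB : MeasurableSet {ω | X ω = -1} := hm (measurableSet_singleton (-1))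
  have hX' : X =ᵐ[P] fun ω => {ω | X ω = 1}.indicator 1 ω - {ω | X ω = -1}.indicator 1 ω := by
    filter_upwards [hX.ae_eq_one_or_eq_neg_one hm] with ω h
    rcases h with h | h <;> norm_num [Set.indicator, h]
  rw [integral_congr_ae hX', integral_sub ((integrable_const 1).indicator hA)
    ((integrable_const 1).indicator hB), integral_indicator_one hA, integral_indicator_one hB,
    measureReal_def, measureReal_def, hX.1, hX.2, sub_self]

lemma hasSubgaussianMGF (hX : IsRademacher X P) (hm : Measurable X) :
    HasSubgaussianMGF X 1 P := by
  have hIcc : ∀ᵐ ω ∂P, X ω ∈ Set.Icc (-1) 1 := by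
    filter_upwards [hX.ae_eq_one_or_eq_neg_one hm] with ω h
    rcases h with h | h <;> simp [h]
  have h := hasSubgaussianMGF_of_mem_Icc_of_integral_eq_zero hm.aemeasurable hIcc
    (hX.integral_eq_zero hm)
  norm_num at h
  exact h

end IsRademacher

lemma hasSubgaussianMGF_sum_rademacher_mul {Ω ι : Type*} [MeasurableSpace Ω] {P : Measure Ω}
    [IsProbabilityMeasure P] {ε : ι → Ω → ℝ} (hm : ∀ j, Measurable (ε j))
    (hindep : iIndepFun ε P) (hε : ∀ j, IsRademacher (ε j) P) (β : ι → ℝ) (s : Finset ι) :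
    HasSubgaussianMGF (fun ω => ∑ j ∈ s, ε j ω * β j) (∑ j ∈ s, ‖β j‖₊ ^ 2) P := by
  have h (j : ι) : HasSubgaussianMGF (fun ω => ε j ω * β j) (‖β j‖₊ ^ 2) P := by
    have h' := ((hε j).hasSubgaussianMGF (hm j)).const_mul (β j)
    rw [show (⟨β j ^ 2, sq_nonneg _⟩ * 1 : ℝ≥0) = ‖β j‖₊ ^ 2 by
      ext; exact (mul_one _).trans (by simp)] at h'
    exact h'.congr (ae_of_all _ fun ω => mul_comm _ _)
  exact HasSubgaussianMGF.sum_of_iIndepFun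
    (hindep.comp (fun j t => t * β j) fun _ => measurable_id.mul_const _) fun j _ => h j

namespace ProbabilityTheory.HasSubgaussianMGF

variable {Ω : Type*} [MeasurableSpace Ω] {P : Measure Ω} [IsFiniteMeasure P] {X : Ω → ℝ}
  {c : ℝ≥0}

lemma measureReal_add_const_ge_le (h : HasSubgaussianMGF X c P) (b r : ℝ) {t : ℝ}
    (ht : 0 ≤ t) : P.real {ω | r ≤ X ω + b} ≤ exp (-t * (r - b) + c * t ^ 2 / 2) :=
  calc P.real {ω | r ≤ X ω + b} = P.real {ω | r - b ≤ X ω} := by simp_rw [sub_le_iff_le_add]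
    _ ≤ exp (-t * (r - b)) * mgf X P t := measure_ge_le_exp_mul_mgf _ ht (h.integrable_exp_mul t)
    _ ≤ exp (-t * (r - b)) * exp (c * t ^ 2 / 2) := by gcongr; exact h.mgf_le t
    _ = exp (-t * (r - b) + c * t ^ 2 / 2) := (exp_add _ _).symm

-- The deterministic shift `b` enters the variance proxy through `cosh (t b) ≤ exp (t² b² / 2)`.
lemma measureReal_abs_add_const_ge_le_exp (h : HasSubgaussianMGF X c P) (b r : ℝ) {t : ℝ}
    (ht : 0 ≤ t) :
    P.real {ω | r ≤ |X ω + b|} ≤ 2 * exp (-t * r + (c + b ^ 2) * t ^ 2 / 2) := by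
  have hsub : {ω | r ≤ |X ω + b|} ⊆ {ω | r ≤ X ω + b} ∪ {ω | r ≤ (-X) ω + -b} := by
    intro ω hω
    rcases le_abs'.1 (show r ≤ |X ω + b| from hω) with h' | h'
    · right; show r ≤ -X ω + -b; linarith
    · left; exact h'
  calc P.real {ω | r ≤ |X ω + b|}
      ≤ P.real {ω | r ≤ X ω + b} + P.real {ω | r ≤ (-X) ω + -b} :=
        (measureReal_mono hsub).trans (measureReal_union_le _ _)
    _ ≤ exp (-t * (r - b) + c * t ^ 2 / 2) + exp (-t * (r - -b) + c * t ^ 2 / 2) :=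
        add_le_add (h.measureReal_add_const_ge_le b r ht)
          (h.neg.measureReal_add_const_ge_le _ r ht)
    _ = 2 * exp (-t * r + c * t ^ 2 / 2) * cosh (t * b) := by
        rw [cosh_eq, show -t * (r - b) + c * t ^ 2 / 2 = -t * r + c * t ^ 2 / 2 + t * b by ring,
          show -t * (r - -b) + c * t ^ 2 / 2 = -t * r + c * t ^ 2 / 2 + -(t * b) by ring,
          exp_add (-t * r + c * t ^ 2 / 2), exp_add (-t * r + c * t ^ 2 / 2)]
        ring
    _ ≤ 2 * exp (-t * r + c * t ^ 2 / 2) * exp ((t * b) ^ 2 / 2) := by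
        gcongr; exact cosh_le_exp_half_sq _
    _ = 2 * exp (-t * r + (c + b ^ 2) * t ^ 2 / 2) := by
        rw [mul_assoc, ← exp_add]; congr 2; ring

lemma measureReal_abs_add_const_ge_le (h : HasSubgaussianMGF X c P) (b : ℝ) {r σ2 : ℝ}
    (hr : 0 ≤ r) (hσ : c + b ^ 2 ≤ σ2) :
    P.real {ω | r ≤ |X ω + b|} ≤ 2 * exp (-r ^ 2 / (2 * σ2)) := by
  have hσ0 : 0 ≤ σ2 := le_trans (by positivity) hσ
  calc P.real {ω | r ≤ |X ω + b|}
      ≤ 2 * exp (-(r / σ2) * r + (c + b ^ 2) * (r / σ2) ^ 2 / 2) :=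
        h.measureReal_abs_add_const_ge_le_exp b r (by positivity)
    _ ≤ 2 * exp (-(r / σ2) * r + σ2 * (r / σ2) ^ 2 / 2) := by gcongr
    _ = 2 * exp (-r ^ 2 / (2 * σ2)) := by
        rcases hσ0.eq_or_lt with h0 | h0
        · simp [← h0]
        · field_simp; ring_nf

end ProbabilityTheory.HasSubgaussianMGF

lemma sum_mul_sum_add_eq_sum_mul_dotProduct_add {R ι κ : Type*} [CommSemiring R] [Fintype κ]
    (u v : κ → R) (w : ι → κ → R) (e x : ι → R) (s : Finset ι) :
    ∑ t, u t * ((∑ j ∈ s, e j * x j * w j t) + v t) =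
      ∑ j ∈ s, e j * (x j * (u ⬝ᵥ w j)) + u ⬝ᵥ v := by
  simp only [mul_add, Finset.sum_add_distrib, Finset.mul_sum, dotProduct]
  rw [Finset.sum_comm]
  congr 1
  refine Finset.sum_congr rfl fun j _ => Finset.sum_congr rfl fun t _ => by ring

lemma abs_sub_abs_sum_erase_le {R ι : Type*} [CommRing R] [LinearOrder R] [IsStrictOrderedRing R]
    [DecidableEq ι] {s : Finset ι} {i : ι} (hi : i ∈ s) {e β : ι → R}
    (he : e i = 1 ∨ e i = -1) (b : R) :
    |β i| - |∑ j ∈ s.erase i, e j * β j + b| ≤ |e i * (∑ j ∈ s, e j * β j + b)| := by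
  have he2 : e i * e i = 1 := by rcases he with h | h <;> simp [h]
  have habs : |e i| = 1 := by rcases he with h | h <;> simp [h]
  set V := ∑ j ∈ s.erase i, e j * β j + b
  calc |β i| - |V| = |β i| - |-(e i * V)| := by rw [abs_neg, abs_mul, habs, one_mul]
    _ ≤ |β i - -(e i * V)| := abs_sub_abs_le_abs_sub _ _
    _ = |e i * (∑ j ∈ s, e j * β j + b)| := by
        rw [← Finset.sum_erase_add s _ hi]
        congr 1
        linear_combination (-β i) * he2

lemma sum_erase_sq_mul_le_of_abs_le {R ι : Type*} [CommRing R] [LinearOrder R]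
    [IsStrictOrderedRing R] [DecidableEq ι] {s : Finset ι} {i : ι} {x g : ι → R} {xmax μ : R}
    {S : ℕ} (hx : ∀ j ∈ s, |x j| ≤ xmax) (hg : ∀ j ≠ i, |g j| ≤ μ)
    (hS : #{j ∈ s | g j ≠ 0} ≤ S) :
    ∑ j ∈ s.erase i, (x j * g j) ^ 2 ≤ xmax ^ 2 * S * μ ^ 2 := by
  have hterm : ∀ j ∈ {j ∈ s.erase i | (x j * g j) ^ 2 ≠ 0},
      (x j * g j) ^ 2 ≤ xmax ^ 2 * μ ^ 2 := by
    intro j hj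
    obtain ⟨hji, hjs⟩ := Finset.mem_erase.1 (Finset.mem_filter.1 hj).1
    rw [mul_pow]
    exact mul_le_mul (sq_le_sq' (abs_le.1 (hx j hjs)).1 (abs_le.1 (hx j hjs)).2)
      (sq_le_sq' (abs_le.1 (hg j hji)).1 (abs_le.1 (hg j hji)).2) (sq_nonneg _) (sq_nonneg _)
  have hcard : #{j ∈ s.erase i | (x j * g j) ^ 2 ≠ 0} ≤ S := by
    refine le_trans (Finset.card_le_card fun j hj => ?_) hS
    simp only [Finset.mem_filter, Finset.mem_erase] at hj ⊢
    exact ⟨hj.1.2, fun h0 => hj.2 (by simp [h0])⟩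
  calc ∑ j ∈ s.erase i, (x j * g j) ^ 2
      = ∑ j ∈ s.erase i with (x j * g j) ^ 2 ≠ 0, (x j * g j) ^ 2 :=
        (Finset.sum_filter_ne_zero _).symm
    _ ≤ #{j ∈ s.erase i | (x j * g j) ^ 2 ≠ 0} • (xmax ^ 2 * μ ^ 2) :=
        Finset.sum_le_card_nsmul _ _ _ hterm
    _ ≤ S • (xmax ^ 2 * μ ^ 2) := nsmul_le_nsmul_left (by positivity) hcard
    _ = xmax ^ 2 * S * μ ^ 2 := by rw [nsmul_eq_mul]; ring

theorem on_support_correlation_min_general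
    {Ω : Type*} [MeasurableSpace Ω] (P : Measure Ω) [IsProbabilityMeasure P]
    (n N : ℕ)
    -- unit ℓ2-norm vectors `a_1, …, a_N ∈ ℝ^n`
    (a : Fin N → Fin n → ℝ)
    (ha : ∀ j, ∑ t, a j t ^ 2 = 1)
    -- mutual coherence `μ`
    (μ : ℝ)
    (hμ : ∀ i j, i ≠ j → |∑ t, a i t * a j t| ≤ μ)
    -- `x` supported on `Λ`, nonzero magnitudes between `x_min` and `x_max`
    (Λ : Finset (Fin N)) (x : Fin N → ℝ)
    (xmin xmax : ℝ)
    (hxmin : ∀ i ∈ Λ, xmin ≤ |x i|) (hxmax : ∀ i ∈ Λ, |x i| ≤ xmax)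
    -- overlap bound at every on-support index
    (S : ℕ)
    (hS : ∀ i ∈ Λ, Set.ncard {j | j ∈ Λ ∧ (∑ t, a i t * a j t) ≠ 0} ≤ S)
    -- noise
    (v : Fin n → ℝ) (ζ : ℝ) (hv : ∀ i ∈ Λ, |∑ t, a i t * v t| ≤ ζ)
    -- i.i.d. Rademacher signs
    (ε : Fin N → Ω → ℝ)
    (hmeas : ∀ i, Measurable (ε i))
    (hindep : iIndepFun ε P)
    (hdist : ∀ i, P {ω | ε i ω = 1} = 1 / 2 ∧ P {ω | ε i ω = -1} = 1 / 2)
    (p : ℝ) (hpmin : p ≤ xmin) :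
    P {ω | ∃ i ∈ Λ,
        |ε i ω * ∑ t, a i t * ((∑ j ∈ Λ, ε j ω * x j * a j t) + v t)| < p} ≤
      ENNReal.ofReal (2 * Λ.card *
        Real.exp (-((xmin - p) ^ 2) / (2 * (xmax ^ 2 * S * μ ^ 2 + ζ ^ 2)))) := by
  classical
  let T (i : Fin N) : Set Ω :=
    {ω | xmin - p ≤ |∑ j ∈ Λ.erase i, ε j ω * (x j * (a i ⬝ᵥ a j)) + a i ⬝ᵥ v|}
  have htail : ∀ i ∈ Λ,
      P.real (T i) ≤ 2 * exp (-(xmin - p) ^ 2 / (2 * (xmax ^ 2 * S * μ ^ 2 + ζ ^ 2))) := by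
    intro i hi
    have hS' : #{j ∈ Λ | a i ⬝ᵥ a j ≠ 0} ≤ S := by
      rw [← Set.ncard_coe_finset, Finset.coe_filter]
      exact hS i hi
    refine (hasSubgaussianMGF_sum_rademacher_mul hmeas hindep hdist _ _
      ).measureReal_abs_add_const_ge_le _ (sub_nonneg.2 hpmin) ?_
    push_cast
    simp only [Real.norm_eq_abs, sq_abs]
    exact add_le_add (sum_erase_sq_mul_le_of_abs_le hxmax (fun j hj => hμ i j hj.symm) hS')
      (sq_le_sq' (abs_le.1 (hv i hi)).1 (abs_le.1 (hv i hi)).2)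
  have hsub : {ω | ∃ i ∈ Λ,
      |ε i ω * ∑ t, a i t * ((∑ j ∈ Λ, ε j ω * x j * a j t) + v t)| < p} ≤ᵐ[P] ⋃ i ∈ Λ, T i := by
    filter_upwards [ae_all_iff.2 fun j =>
      IsRademacher.ae_eq_one_or_eq_neg_one (hdist j) (hmeas j)] with ω hω ⟨i, hi, hlt⟩
    have hii : a i ⬝ᵥ a i = 1 := by simpa [dotProduct, sq] using ha i
    have hlow := abs_sub_abs_sum_erase_le hi (e := fun j => ε j ω) (hω i)
      (β := fun j => x j * (a i ⬝ᵥ a j)) (a i ⬝ᵥ v)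
    rw [sum_mul_sum_add_eq_sum_mul_dotProduct_add] at hlt
    simp only [hii, mul_one] at hlow
    refine Set.mem_biUnion hi ?_
    show xmin - p ≤ _
    linarith [hxmin i hi]
  calc _ ≤ P (⋃ i ∈ Λ, T i) := measure_mono_ae hsub
    _ = ENNReal.ofReal (P.real (⋃ i ∈ Λ, T i)) :=
        (ofReal_measureReal (measure_ne_top _ _)).symm
    _ ≤ _ := ENNReal.ofReal_le_ofReal <| calc
        P.real (⋃ i ∈ Λ, T i) ≤ ∑ i ∈ Λ, P.real (T i) := measureReal_biUnion_finset_le _ _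
        _ ≤ ∑ i ∈ Λ, 2 * exp (-(xmin - p) ^ 2 / (2 * (xmax ^ 2 * S * μ ^ 2 + ζ ^ 2))) :=
          Finset.sum_le_sum htail
        _ = _ := by rw [Finset.sum_const, nsmul_eq_mul]; ring

/-- Rademacher concentration for the minimal on-support
correlation: for `y = Σ_{j∈Λ} ε_j x_j a_j + v` and `0 < p ≤ |x_min|`, the
probability that `min_{i∈Λ} |⟨ε_i a_i, y⟩| < p` is at most
`2 |Λ| exp(−(|x_min| − p)²/(2(|x_max|² S μ² + ζ²)))`. -/
theorem on_support_correlation_min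
    {Ω : Type*} [MeasurableSpace Ω] (P : Measure Ω) [IsProbabilityMeasure P]
    (n N : ℕ)
    -- unit ℓ2-norm vectors `a_1, …, a_N ∈ ℝ^n`
    (a : Fin N → Fin n → ℝ)
    (ha : ∀ j, ∑ t, a j t ^ 2 = 1)
    -- mutual coherence `μ`
    (μ : ℝ) (hμ0 : 0 ≤ μ)
    (hμ : ∀ i j, i ≠ j → |∑ t, a i t * a j t| ≤ μ)
    -- `x` supported on `Λ`, nonzero magnitudes between `x_min` and `x_max`
    (Λ : Finset (Fin N)) (x : Fin N → ℝ)
    (hsupp : ∀ i, x i ≠ 0 → i ∈ Λ)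
    (xmin xmax : ℝ)
    (hxmin : ∀ i ∈ Λ, xmin ≤ |x i|) (hxmax : ∀ i ∈ Λ, |x i| ≤ xmax)
    -- overlap bound at every on-support index
    (S : ℕ)
    (hS : ∀ i ∈ Λ, Set.ncard {j | j ∈ Λ ∧ (∑ t, a i t * a j t) ≠ 0} ≤ S)
    -- noise
    (v : Fin n → ℝ) (ζ : ℝ) (hv : ∀ i ∈ Λ, |∑ t, a i t * v t| ≤ ζ)
    -- i.i.d. Rademacher signs
    (ε : Fin N → Ω → ℝ)
    (hmeas : ∀ i, Measurable (ε i))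
    (hindep : iIndepFun ε P)
    (hdist : ∀ i, P {ω | ε i ω = 1} = 1 / 2 ∧ P {ω | ε i ω = -1} = 1 / 2)
    (p : ℝ) (hp0 : 0 < p) (hpmin : p ≤ xmin) :
    P {ω | ∃ i ∈ Λ,
        |ε i ω * ∑ t, a i t * ((∑ j ∈ Λ, ε j ω * x j * a j t) + v t)| < p} ≤
      ENNReal.ofReal (2 * Λ.card *
        Real.exp (-((xmin - p) ^ 2) / (2 * (xmax ^ 2 * S * μ ^ 2 + ζ ^ 2)))) :=
  on_support_correlation_min_general P n N a ha μ hμ Λ x xmin xmax hxmin hxmax S hS v ζ hv ε hmeas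
    hindep hdist p hpmin
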